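/- Fix a ∈ (0, 1/2). For odd n ∈ ℕ set m = (n−1)/2. Then there exist C > 0 and N such that for all odd n ≥ N and all x ∈ [n^{−a}, π − n^{−a}], |Σ_{j=0}^{m} (j + (n+1)/4)² sin²((j + (n+1)/4)x) − 13n³/192| ≤ C n^{2+a}. -/

import Mathlib

/-!
Writing `sin² θ = (1 - cos 2θ) / 2`, the sum splits into half of `Σ (j + c)²` with
`c = (n + 1) / 4`, which is exactly `(13n³ + 15n² - n - 3) / 192`, minus an oscillating sum
`Σ (j + c)² cos (2(j + c)x)`. Partial sums of `cos (θ + 2jx)` telescope after multiplication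
by `2 sin x`, so they are bounded by `1 / sin x`, and summation by parts against the increasing
weights `(j + c)²` bounds the oscillating sum by `O(n² / sin x)`. On `[n^(-ν), π - n^(-ν)]`
Jordan's inequality gives `1 / sin x ≤ (π / 2) n^ν`.
-/

open Real Set Finset

lemma sum_range_add_sq (c : ℝ) (K : ℕ) :
    ∑ j ∈ range (K + 1), ((j : ℝ) + c) ^ 2
      = K * (K + 1) * (2 * K + 1) / 6 + c * K * (K + 1) + (K + 1) * c ^ 2 := by
  induction K with
  | zero => simp
  | succ K ih => rw [sum_range_succ, ih]; push_cast; ring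

lemma two_div_pi_mul_le_sin_of_mem_Icc {t x : ℝ} (ht : 0 ≤ t) (hx : x ∈ Icc t (π - t)) :
    2 / π * t ≤ sin x := by
  obtain ⟨htx, hxt⟩ := hx
  rcases le_total x (π / 2) with hx2 | hx2
  · exact (mul_le_mul_of_nonneg_left htx (by positivity)).trans (mul_le_sin (ht.trans htx) hx2)
  · rw [← sin_pi_sub]
    exact (mul_le_mul_of_nonneg_left (by linarith) (by positivity)).trans
      (mul_le_sin (by linarith) (by linarith))

lemma abs_sum_range_cos_le (θ : ℝ) {x : ℝ} (hx : 0 < sin x) (K : ℕ) :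
    |∑ j ∈ range K, cos (θ + j * (2 * x))| ≤ 1 / sin x := by
  have telescope : 2 * sin x * ∑ j ∈ range K, cos (θ + j * (2 * x))
      = sin (θ + (2 * K - 1) * x) - sin (θ - x) := by
    rw [mul_sum]
    convert sum_range_sub (fun j : ℕ => sin (θ + (2 * j - 1) * x)) K using 1
    · refine sum_congr rfl fun j _ => ?_
      rw [show θ + (2 * ((j + 1 : ℕ) : ℝ) - 1) * x = θ + j * (2 * x) + x by push_cast; ring,
        show θ + (2 * (j : ℝ) - 1) * x = θ + j * (2 * x) - x by ring, sin_add, sin_sub]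
      ring
    · simp [sub_eq_add_neg]
  have bound : |2 * sin x * ∑ j ∈ range K, cos (θ + j * (2 * x))| ≤ 2 := by
    rw [telescope]
    linarith [abs_sub (sin (θ + (2 * K - 1) * x)) (sin (θ - x)),
      abs_sin_le_one (θ + (2 * K - 1) * x), abs_sin_le_one (θ - x)]
  rw [abs_mul, abs_mul, abs_two, abs_of_pos hx] at bound
  rw [le_div_iff₀ hx]
  linarith

/-- Abel's inequality for increasing nonnegative weights. -/
lemma abs_sum_range_mul_le_of_monotone {a b : ℕ → ℝ} (ha : Monotone a) (ha₀ : 0 ≤ a 0) {B : ℝ}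
    (hb : ∀ K, |∑ j ∈ range K, b j| ≤ B) (K : ℕ) :
    |∑ j ∈ range (K + 1), a j * b j| ≤ 2 * a K * B := by
  have hB : 0 ≤ B := (abs_nonneg _).trans (hb 0)
  have hΔ : ∀ i, 0 ≤ a (i + 1) - a i := fun i => sub_nonneg.2 (ha i.le_succ)
  have tail : |∑ i ∈ range K, (a (i + 1) - a i) * ∑ j ∈ range (i + 1), b j| ≤ a K * B :=
    calc |∑ i ∈ range K, (a (i + 1) - a i) * ∑ j ∈ range (i + 1), b j|
        ≤ ∑ i ∈ range K, (a (i + 1) - a i) * B := by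
          refine (abs_sum_le_sum_abs _ _).trans (sum_le_sum fun i _ => ?_)
          rw [abs_mul, abs_of_nonneg (hΔ i)]
          exact mul_le_mul_of_nonneg_left (hb _) (hΔ i)
      _ = (a K - a 0) * B := by rw [← sum_mul, sum_range_sub a]
      _ ≤ a K * B := by nlinarith
  have head : |a K * ∑ j ∈ range (K + 1), b j| ≤ a K * B := by
    rw [abs_mul, abs_of_nonneg (ha₀.trans (ha K.zero_le))]
    exact mul_le_mul_of_nonneg_left (hb _) (ha₀.trans (ha K.zero_le))
  have := sum_range_by_parts a b (K + 1)
  simp only [smul_eq_mul, Nat.add_sub_cancel] at this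
  rw [this]
  linarith [abs_sub (a K * ∑ j ∈ range (K + 1), b j)
    (∑ i ∈ range K, (a (i + 1) - a i) * ∑ j ∈ range (i + 1), b j)]

lemma abs_sum_sq_mul_sin_sq_sub_half_le {c x : ℝ} (hc : 0 ≤ c) (hx : 0 < sin x) (K : ℕ) :
    |∑ j ∈ range (K + 1), ((j : ℝ) + c) ^ 2 * sin ((j + c) * x) ^ 2
        - (∑ j ∈ range (K + 1), ((j : ℝ) + c) ^ 2) / 2| ≤ (K + c) ^ 2 / sin x := by
  have split : ∑ j ∈ range (K + 1), ((j : ℝ) + c) ^ 2 * sin ((j + c) * x) ^ 2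
        - (∑ j ∈ range (K + 1), ((j : ℝ) + c) ^ 2) / 2
      = -(∑ j ∈ range (K + 1), ((j : ℝ) + c) ^ 2 * cos (2 * c * x + j * (2 * x))) / 2 := by
    have pointwise : ∀ j : ℕ, ((j : ℝ) + c) ^ 2 * sin ((j + c) * x) ^ 2
        = ((j : ℝ) + c) ^ 2 / 2 - ((j : ℝ) + c) ^ 2 * cos (2 * c * x + j * (2 * x)) / 2 := by
      intro j
      rw [sin_sq_eq_half_sub, show 2 * ((j + c) * x) = 2 * c * x + j * (2 * x) by ring]
      ring
    rw [sum_congr rfl fun j _ => pointwise j, sum_sub_distrib, ← sum_div, ← sum_div]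
    ring
  have hmono : Monotone fun j : ℕ => ((j : ℝ) + c) ^ 2 := fun i j hij => by
    have : (i : ℝ) ≤ j := by exact_mod_cast hij
    dsimp only
    nlinarith [(i.cast_nonneg : (0 : ℝ) ≤ i)]
  have := abs_sum_range_mul_le_of_monotone hmono (by positivity)
    (abs_sum_range_cos_le (2 * c * x) hx) K
  rw [split, abs_div, abs_neg, abs_two]
  calc _ ≤ 2 * ((K : ℝ) + c) ^ 2 * (1 / sin x) / 2 := by gcongr
    _ = _ := by ring

lemma abs_sum_sq_mul_sin_sq_sub_le {n : ℕ} (hn : Odd n) {x : ℝ} (hx : 0 < sin x) :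
    |∑ j ∈ range ((n - 1) / 2 + 1),
        ((j : ℝ) + ((n : ℝ) + 1) / 4) ^ 2 * sin (((j : ℝ) + ((n : ℝ) + 1) / 4) * x) ^ 2
        - 13 * (n : ℝ) ^ 3 / 192| ≤ n ^ 2 + n ^ 2 / sin x := by
  obtain ⟨k, rfl⟩ := hn
  have hk : (2 * k + 1 - 1) / 2 = k := by omega
  have hc : ((2 * k + 1 : ℕ) + 1 : ℝ) / 4 = (k + 1) / 2 := by push_cast; ring
  rw [hk, hc]
  have oscillation := abs_sum_sq_mul_sin_sq_sub_half_le (c := (k + 1) / 2) (by positivity) hx k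
  have main_error : |(∑ j ∈ range (k + 1), ((j : ℝ) + (k + 1) / 2) ^ 2) / 2
      - 13 * ((2 * k + 1 : ℕ) : ℝ) ^ 3 / 192| ≤ ((2 * k + 1 : ℕ) : ℝ) ^ 2 := by
    have hk0 : (0 : ℝ) ≤ k := k.cast_nonneg
    rw [sum_range_add_sq, abs_le]
    push_cast
    constructor <;> nlinarith
  have hweight : ((k : ℝ) + (k + 1) / 2) ^ 2 / sin x ≤ ((2 * k + 1 : ℕ) : ℝ) ^ 2 / sin x := by
    gcongr; push_cast; linarith
  refine (abs_sub_le _ ((∑ j ∈ range (k + 1), ((j : ℝ) + (k + 1) / 2) ^ 2) / 2) _).trans ?_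
  rw [add_comm]
  exact add_le_add main_error (oscillation.trans hweight)

/-- For odd `n` and `m = (n-1)/2`, uniformly for `x ∈ [n^(-a), π - n^(-a)]`,
`Σ_{j=0}^{m} (j + (n+1)/4)² sin²((j + (n+1)/4)x) = 13n³/192 + O(n^(2+a))`. -/
theorem estimate_C_two_blocks_odd
    (ν : ℝ) (hν : ν ∈ Set.Ioo (0 : ℝ) (1 / 2)) :
    ∃ C > 0, ∃ N : ℕ, ∀ n ≥ N, Odd n →
      ∀ x ∈ Set.Icc ((n : ℝ) ^ (-ν)) (π - (n : ℝ) ^ (-ν)),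
        |(∑ j ∈ Finset.range ((n - 1) / 2 + 1),
            ((j : ℝ) + ((n : ℝ) + 1) / 4) ^ 2 *
              Real.sin (((j : ℝ) + ((n : ℝ) + 1) / 4) * x) ^ 2) -
          13 * (n : ℝ) ^ 3 / 192|
          ≤ C * (n : ℝ) ^ (2 + ν) := by
  refine ⟨1 + π / 2, by positivity, 1, fun n hn hodd x hx => ?_⟩
  have hn1 : (1 : ℝ) ≤ n := by exact_mod_cast hn
  have hn0 : (0 : ℝ) < n := by linarith
  have hsin := two_div_pi_mul_le_sin_of_mem_Icc (rpow_nonneg hn0.le _) hx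
  rw [rpow_neg hn0.le] at hsin
  have hsin0 : 0 < sin x := lt_of_lt_of_le (by positivity) hsin
  have hinv : (n : ℝ) ^ 2 / sin x ≤ π / 2 * (n : ℝ) ^ (2 + ν) := by
    rw [div_le_iff₀ hsin0, rpow_add hn0, rpow_two]
    have hnν : (0 : ℝ) < n ^ ν := rpow_pos_of_pos hn0 ν
    calc (n : ℝ) ^ 2 = π / 2 * ((n : ℝ) ^ 2 * (n : ℝ) ^ ν) * (2 / π * ((n : ℝ) ^ ν)⁻¹) := by
          field_simp
      _ ≤ π / 2 * ((n : ℝ) ^ 2 * (n : ℝ) ^ ν) * sin x := by gcongr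
  have hsq : (n : ℝ) ^ 2 ≤ (n : ℝ) ^ (2 + ν) := by
    rw [← rpow_two]
    exact rpow_le_rpow_of_exponent_le hn1 (by linarith [hν.1])
  calc _ ≤ (n : ℝ) ^ 2 + n ^ 2 / sin x := abs_sum_sq_mul_sin_sq_sub_le hodd hsin0
    _ ≤ (1 + π / 2) * (n : ℝ) ^ (2 + ν) := by linarith
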